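/- The Grassmann necklace of a point agrees with the Grassmann necklace of its bounded affine permutation: let X be a k×n complex matrix of rank k. For a ∈ {1,…,n} let I_a(X) be the minimum, with respect to the lexicographic order induced by the cyclic order ≤_a, of the collection { J ⊆ {1,…,n} : |J| = k and Δ_J(X) ≠ 0 }. Then (I_1(X),…,I_n(X)) is a (k,n)-Grassmann necklace, and for every a one has I_a(X) = { r ∈ {1,…,n} : r ≡ f_X(b) (mod n) for some integer b with b < a and f_X(b) ≥ a }, i.e., the necklace of X equals the necklace I(f_X) associated to the bounded affine permutation f_X. -/

import Mathlib

/-- The Plücker coordinate `Δ_I(M)` of a `k × n` complex matrix: the determinant of the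
`k × k` submatrix on the columns of `I` in increasing order (and `0` if `I` does not
have exactly `k` elements). -/
noncomputable def plk {k n : ℕ} (M : Matrix (Fin k) (Fin n) ℂ) (I : Finset (Fin n)) : ℂ :=
  if h : I.card = k then (M.submatrix id (fun r => I.orderEmbOfFin h r)).det else 0

/-- The lexicographic order on equal-size subsets of `{1,…,n}` induced by the cyclic
rotation `≤_a` of the linear order starting at `a` (here `a` is the 0-indexed start):
`I ≤ J` iff `I = J` or the minimum of the symmetric difference, computed after rotating
by `a`, lies in `I`. -/
def cyclexLE {n : ℕ} (a : Fin n) (I J : Finset (Fin n)) : Prop :=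
  I = J ∨ ∃ y ∈ I.image (· - a) \ J.image (· - a),
      ∀ x ∈ J.image (· - a) \ I.image (· - a), y < x

/-- The columns `v_j` of a `k × n` matrix (columns labelled `1,…,n`), extended to all
`j ∈ ℤ` by the convention `v_{j+n} = (−1)^{k−1} v_j`. -/
noncomputable def extCol {k n : ℕ} [NeZero n] (X : Matrix (Fin k) (Fin n) ℂ) (j : ℤ) :
    Fin k → ℂ :=
  fun r =>
    ((-1 : ℂ) ^ (k - 1)) ^ ((j - 1) / (n : ℤ)) *
      X r ⟨((j - 1) % (n : ℤ)).toNat, by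
        have hn : (0 : ℤ) < (n : ℤ) := by exact_mod_cast Nat.pos_of_ne_zero (NeZero.ne n)
        have h1 : 0 ≤ (j - 1) % (n : ℤ) := Int.emod_nonneg _ (by omega)
        have h2 : (j - 1) % (n : ℤ) < (n : ℤ) := Int.emod_lt_of_pos _ hn
        omega⟩

/-- The bounded affine permutation of a point of the Grassmannian:
`f_X(i) = min { j ≥ i : v_i ∈ span(v_{i+1},…,v_j) }`. -/
noncomputable def fX {k n : ℕ} [NeZero n] (X : Matrix (Fin k) (Fin n) ℂ) (i : ℤ) : ℤ :=
  sInf {j : ℤ | i ≤ j ∧ extCol X i ∈ Submodule.span ℂ (extCol X '' Set.Ioc i j)}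

open scoped Classical in
/-- The Grassmann necklace of a bounded affine permutation:
`I_a(f) = { r ∈ {1,…,n} : r ≡ f(b) (mod n) for some b < a with f(b) ≥ a }`. -/
noncomputable def necklaceOf (n : ℕ) (f : ℤ → ℤ) (a : ℤ) : Finset ℤ :=
  (Finset.Icc (1 : ℤ) (n : ℤ)).filter
    (fun r => ∃ b : ℤ, b < a ∧ a ≤ f b ∧ (n : ℤ) ∣ (f b - r))

/-- A `(k,n)`-Grassmann necklace, encoded as an `n`-periodic sequence of `k`-element
subsets of `{1,…,n}` satisfying the necklace conditions for `a ∈ {1,…,n}`. -/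
def IsGN (k n : ℕ) (I : ℤ → Finset ℤ) : Prop :=
  (∀ a : ℤ, I (a + n) = I a) ∧
  (∀ a : ℤ, I a ⊆ Finset.Icc (1 : ℤ) (n : ℤ)) ∧
  (∀ a : ℤ, (I a).card = k) ∧
  (∀ a ∈ Finset.Icc (1 : ℤ) (n : ℤ),
    (a ∉ I a → I (a + 1) = I a) ∧
    (a ∈ I a → ∃ a' ∈ Finset.Icc (1 : ℤ) (n : ℤ),
      I (a + 1) = insert a' ((I a).erase a)))

set_option linter.unusedSectionVars false

noncomputable section
namespace GNaux
open Submodule Set Module Matrix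

variable {k n : ℕ} [NeZero n]

lemma npos : (0:ℤ) < (n:ℤ) := by exact_mod_cast Nat.pos_of_ne_zero (NeZero.ne n)

/-- the sign `(-1)^(k-1)`. -/
def sg (k : ℕ) : ℂ := (-1 : ℂ) ^ (k - 1)

lemma sg_ne : sg k ≠ 0 := pow_ne_zero _ (by norm_num)

lemma sg_zpow_ne (q : ℤ) : sg k ^ q ≠ 0 := zpow_ne_zero _ sg_ne

/-- the column index in `Fin n` represented by the integer `j`. -/
def colIdx (n : ℕ) [NeZero n] (j : ℤ) : Fin n :=
  ⟨((j - 1) % (n : ℤ)).toNat, by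
    have h1 : 0 ≤ (j - 1) % (n : ℤ) := Int.emod_nonneg _ (by have := npos (n := n); omega)
    have h2 : (j - 1) % (n : ℤ) < (n : ℤ) := Int.emod_lt_of_pos _ npos
    omega⟩

lemma colIdx_val (j : ℤ) : ((colIdx n j : Fin n) : ℤ) = (j - 1) % (n : ℤ) := by
  simp only [colIdx]
  have h1 : 0 ≤ (j - 1) % (n : ℤ) := Int.emod_nonneg _ (by have := npos (n := n); omega)
  omega

variable (X : Matrix (Fin k) (Fin n) ℂ)

lemma extCol_eq (j : ℤ) :
    extCol X j = (sg k ^ ((j - 1) / (n : ℤ))) • Xᵀ (colIdx n j) := by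
  funext r
  simp [extCol, colIdx, sg, Matrix.transpose_apply]

lemma extCol_add_n (j : ℤ) : extCol X (j + n) = sg k • extCol X j := by
  have h1 : (j + (n:ℤ) - 1) / (n : ℤ) = (j - 1) / (n:ℤ) + 1 := by
    rw [show j + (n:ℤ) - 1 = (j - 1) + 1 * (n:ℤ) by ring, Int.add_mul_ediv_right _ _ (by have := npos (n := n); omega)]
  have h2 : colIdx n (j + n) = colIdx n j := by
    apply Fin.ext
    have : ((colIdx n (j+n) : Fin n) : ℤ) = ((colIdx n j : Fin n) : ℤ) := by
      rw [colIdx_val, colIdx_val, show j + (n:ℤ) - 1 = (j - 1) + (n:ℤ)*1 by ring,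
        Int.add_mul_emod_self_left]
    exact_mod_cast this
  rw [extCol_eq, extCol_eq, h1, h2, zpow_add₀ sg_ne, zpow_one, mul_comm, mul_smul]

lemma span_image_unit_smul {ι : Type*} (g : ι → Fin k → ℂ) (ε : ι → ℂ) (hε : ∀ i, ε i ≠ 0)
    (s : Set ι) :
    span ℂ ((fun i => ε i • g i) '' s) = span ℂ (g '' s) := by
  apply le_antisymm <;> rw [span_le] <;> rintro _ ⟨i, hi, rfl⟩
  · exact smul_mem _ _ (subset_span ⟨i, hi, rfl⟩)
  · have hg : g i = (ε i)⁻¹ • (ε i • g i) := by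
      rw [smul_smul, inv_mul_cancel₀ (hε i), one_smul]
    rw [hg]
    exact smul_mem _ _ (subset_span ⟨i, hi, rfl⟩)

lemma image_extCol_shift (i j : ℤ) :
    extCol X '' Set.Ioc (i + n) (j + n) = (fun t => sg k • extCol X t) '' Set.Ioc i j := by
  rw [← Set.image_add_const_Ioc (n:ℤ) i j, Set.image_image]
  apply Set.image_congr
  intro t _
  exact extCol_add_n X t

lemma span_shift (i j : ℤ) :
    span ℂ (extCol X '' Set.Ioc (i + n) (j + n)) = span ℂ (extCol X '' Set.Ioc i j) := by
  rw [image_extCol_shift]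
  exact span_image_unit_smul _ (fun _ => sg k) (fun _ => sg_ne) _

end GNaux
namespace GNaux
open Submodule Set Module Matrix

variable {k n : ℕ} [NeZero n] (X : Matrix (Fin k) (Fin n) ℂ)

/-- the defining set of `fX`. -/
def fset (i : ℤ) : Set ℤ :=
  {j : ℤ | i ≤ j ∧ extCol X i ∈ Submodule.span ℂ (extCol X '' Set.Ioc i j)}

lemma smul_mem_iff' {x : Fin k → ℂ} {p : Submodule ℂ (Fin k → ℂ)} :
    sg k • x ∈ p ↔ x ∈ p :=
  p.smul_mem_iff sg_ne

lemma mem_fset_add_n (i : ℤ) : i + (n:ℤ) ∈ fset X i := by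
  constructor
  · have := npos (n := n); omega
  · have hm : extCol X (i + n) ∈ span ℂ (extCol X '' Set.Ioc i (i + n)) :=
      subset_span ⟨i + n, ⟨by have := npos (n := n); omega, le_refl _⟩, rfl⟩
    rw [extCol_add_n] at hm
    exact smul_mem_iff'.1 hm

lemma fset_bdd (i : ℤ) : ∀ j ∈ fset X i, i ≤ j := fun _ hj => hj.1

lemma fX_spec (i : ℤ) : fX X i ∈ fset X i :=
  Int.csInf_mem ⟨i + n, mem_fset_add_n X i⟩ ⟨i, fset_bdd X i⟩

lemma le_fX (i : ℤ) : i ≤ fX X i := (fX_spec X i).1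

lemma fX_mem_span (i : ℤ) : extCol X i ∈ span ℂ (extCol X '' Set.Ioc i (fX X i)) :=
  (fX_spec X i).2

lemma fX_le_iff {i t : ℤ} (h : i ≤ t) :
    fX X i ≤ t ↔ extCol X i ∈ span ℂ (extCol X '' Set.Ioc i t) := by
  constructor
  · intro hle
    exact span_mono (Set.image_mono (Set.Ioc_subset_Ioc_right hle)) (fX_mem_span X i)
  · intro hmem
    exact csInf_le ⟨i, fset_bdd X i⟩ ⟨h, hmem⟩

lemma fX_le_add_n (i : ℤ) : fX X i ≤ i + n :=
  csInf_le ⟨i, fset_bdd X i⟩ (mem_fset_add_n X i)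

lemma not_mem_span_of_lt_fX {i t : ℤ} (h : i ≤ t) (h2 : t < fX X i) :
    extCol X i ∉ span ℂ (extCol X '' Set.Ioc i t) := by
  intro hmem
  exact absurd ((fX_le_iff X h).2 hmem) (by omega)

lemma fX_add_n (i : ℤ) : fX X (i + n) = fX X i + n := by
  have h1 : fX X (i + n) ≤ fX X i + n := by
    rw [fX_le_iff X (by have := le_fX X i; omega)]
    have : extCol X i ∈ span ℂ (extCol X '' Set.Ioc i (fX X i)) := fX_mem_span X i
    rw [← span_shift, ← smul_mem_iff' (k := k), ← extCol_add_n] at this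
    exact this
  have h2 : fX X i ≤ fX X (i + n) - n := by
    rw [fX_le_iff X (by have := le_fX X (i + n); omega)]
    have : extCol X (i + n) ∈ span ℂ (extCol X '' Set.Ioc (i+n) (fX X (i+n))) :=
      fX_mem_span X (i + n)
    rw [show fX X (i+n) = (fX X (i+n) - n) + n by ring, span_shift, extCol_add_n,
      smul_mem_iff'] at this
    exact this
  omega

/-- if `f(b) = c` with `b < c`, then `v_c` is not in the span of `v_{b'},…,v_{c-1}` for
any `b ≤ b' `. -/
lemma keyA {b c d : ℤ} (hbc : b < c) (hbd : b ≤ d) (hf : fX X b = c) :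
    extCol X c ∉ span ℂ (extCol X '' Set.Ioc d (c - 1)) := by
  intro hmem
  have h1 : extCol X b ∈ span ℂ (extCol X '' Set.Ioc b c) := by
    rw [← hf]; exact fX_mem_span X b
  have h2 : extCol X b ∉ span ℂ (extCol X '' Set.Ioc b (c - 1)) :=
    not_mem_span_of_lt_fX X (by omega) (by omega)
  have hioc : Set.Ioc b c = insert c (Set.Ioc b (c - 1)) := by
    ext t; simp only [Set.mem_Ioc, Set.mem_insert_iff]; omega
  rw [hioc, Set.image_insert_eq] at h1
  have hc : extCol X c ∈ span ℂ (extCol X '' Set.Ioc b (c - 1)) :=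
    span_mono (Set.image_mono (Set.Ioc_subset_Ioc_left hbd)) hmem
  rw [span_insert_eq_span hc] at h1
  exact h2 h1

/-- injectivity of `fX` on relevant ranges. -/
lemma fX_injOn {b₁ b₂ : ℤ} (h12 : b₁ < b₂) (hb2 : b₂ < fX X b₂)
    (heq : fX X b₁ = fX X b₂) : False := by
  set c := fX X b₂ with hc
  have h2mem : extCol X b₂ ∈ span ℂ (extCol X '' Set.Ioc b₂ c) := fX_mem_span X b₂
  have h2not : extCol X b₂ ∉ span ℂ (extCol X '' Set.Ioc b₂ (c - 1)) :=
    not_mem_span_of_lt_fX X (by omega) (by omega)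
  have hioc : Set.Ioc b₂ c = insert c (Set.Ioc b₂ (c - 1)) := by
    ext t; simp only [Set.mem_Ioc, Set.mem_insert_iff]; omega
  rw [hioc, Set.image_insert_eq] at h2mem
  have hex : extCol X c ∈ span ℂ (insert (extCol X b₂) (extCol X '' Set.Ioc b₂ (c - 1))) :=
    mem_span_insert_exchange h2mem h2not
  have hsub : insert (extCol X b₂) (extCol X '' Set.Ioc b₂ (c - 1))
      ⊆ extCol X '' Set.Ioc b₁ (c - 1) := by
    rintro x (rfl | ⟨t, ht, rfl⟩)
    · exact ⟨b₂, ⟨by omega, by omega⟩, rfl⟩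
    · obtain ⟨ht1, ht2⟩ := ht
      exact ⟨t, ⟨by omega, ht2⟩, rfl⟩
  have hc2 : extCol X c ∈ span ℂ (extCol X '' Set.Ioc b₁ (c - 1)) :=
    span_mono hsub hex
  exact keyA X (by omega) (le_refl b₁) heq hc2

end GNaux
namespace GNaux
open Submodule Set Module Matrix
open scoped Classical

variable {k n : ℕ} [NeZero n]

lemma frk_insert (s : Set (Fin k → ℂ)) (x : Fin k → ℂ) :
    finrank ℂ (span ℂ (insert x s) : Submodule ℂ (Fin k → ℂ))
      = finrank ℂ (span ℂ s : Submodule ℂ (Fin k → ℂ))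
        + (if x ∈ span ℂ s then 0 else 1) := by
  by_cases hx : x ∈ span ℂ s
  · rw [span_insert_eq_span hx, if_pos hx, Nat.add_zero]
  · rw [if_neg hx]
    have hlt : span ℂ s < span ℂ (insert x s) :=
      lt_of_le_of_ne (span_mono (Set.subset_insert _ _))
        (fun he => hx (he ▸ subset_span (Set.mem_insert _ _)))
    have h1 : finrank ℂ (span ℂ s : Submodule ℂ (Fin k → ℂ))
        < finrank ℂ (span ℂ (insert x s) : Submodule ℂ (Fin k → ℂ)) :=
      Submodule.finrank_lt_finrank_of_lt hlt
    have h2 : finrank ℂ (span ℂ (insert x s) : Submodule ℂ (Fin k → ℂ))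
        ≤ finrank ℂ (span ℂ s : Submodule ℂ (Fin k → ℂ)) + 1 := by
      rw [span_insert]
      refine le_trans (Submodule.finrank_add_le_finrank_add_finrank _ _) ?_
      have hx1 : finrank ℂ (ℂ ∙ x : Submodule ℂ (Fin k → ℂ)) ≤ 1 := by
        by_cases hx0 : x = 0
        · rw [hx0, Submodule.span_zero_singleton]; simp
        · rw [finrank_span_singleton hx0]
      omega
    omega

end GNaux
namespace GNaux
open Submodule Set Module Matrix
open scoped Classical

variable {k n : ℕ} [NeZero n]

lemma count_right (v : ℤ → (Fin k → ℂ)) (m : ℕ) : ∀ lo : ℤ,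
    ((Finset.Ioc lo (lo + (m:ℤ))).filter
        (fun b => v b ∉ span ℂ (v '' Set.Ioc b (lo + (m:ℤ))))).card
      = finrank ℂ (span ℂ (v '' Set.Ioc lo (lo + (m:ℤ))) : Submodule ℂ (Fin k → ℂ)) := by
  induction m with
  | zero =>
      intro lo
      rw [show lo + ((0:ℕ):ℤ) = lo by push_cast; ring, Set.Ioc_self, Finset.Ioc_self]
      rw [Set.image_empty, span_empty, finrank_bot ℂ (Fin k → ℂ)]
      simp
  | succ m ih =>
      intro lo
      have hE2 : lo + (((m:ℕ)+1:ℕ):ℤ) = (lo + 1) + (m:ℤ) := by push_cast; ring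
      rw [hE2]
      have hins : Finset.Ioc lo ((lo + 1) + (m:ℤ))
          = insert (lo + 1) (Finset.Ioc (lo + 1) ((lo + 1) + (m:ℤ))) := by
        ext t
        simp only [Finset.mem_Ioc, Finset.mem_insert]
        omega
      have hins' : Set.Ioc lo ((lo + 1) + (m:ℤ))
          = insert (lo + 1) (Set.Ioc (lo + 1) ((lo + 1) + (m:ℤ))) := by
        ext t
        simp only [Set.mem_Ioc, Set.mem_insert_iff]
        omega
      rw [hins, hins', Set.image_insert_eq, frk_insert, ← ih (lo + 1)]
      rw [Finset.filter_insert]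
      have hnotmem : (lo + 1) ∉ (Finset.Ioc (lo + 1) ((lo + 1) + (m:ℤ))).filter
          (fun b => v b ∉ span ℂ (v '' Set.Ioc b ((lo + 1) + (m:ℤ)))) := by
        intro h
        have := (Finset.mem_filter.1 h).1
        simp only [Finset.mem_Ioc] at this
        omega
      by_cases hP : v (lo + 1) ∈ span ℂ (v '' Set.Ioc (lo + 1) ((lo + 1) + (m:ℤ)))
      · rw [if_neg (by simpa using hP), if_pos hP, Nat.add_zero]
      · rw [if_pos hP, if_neg hP, Finset.card_insert_of_notMem hnotmem]

lemma count_left (v : ℤ → (Fin k → ℂ)) (m : ℕ) : ∀ lo : ℤ,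
    ((Finset.Ioc lo (lo + (m:ℤ))).filter
        (fun c => v c ∉ span ℂ (v '' Set.Ioc lo (c - 1)))).card
      = finrank ℂ (span ℂ (v '' Set.Ioc lo (lo + (m:ℤ))) : Submodule ℂ (Fin k → ℂ)) := by
  induction m with
  | zero =>
      intro lo
      rw [show lo + ((0:ℕ):ℤ) = lo by push_cast; ring, Set.Ioc_self, Finset.Ioc_self]
      rw [Set.image_empty, span_empty, finrank_bot ℂ (Fin k → ℂ)]
      simp
  | succ m ih =>
      intro lo
      have hE2 : lo + (((m:ℕ)+1:ℕ):ℤ) = lo + (m:ℤ) + 1 := by push_cast; ring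
      rw [hE2]
      have hins : Finset.Ioc lo (lo + (m:ℤ) + 1)
          = insert (lo + (m:ℤ) + 1) (Finset.Ioc lo (lo + (m:ℤ))) := by
        ext t
        simp only [Finset.mem_Ioc, Finset.mem_insert]
        omega
      have hins' : Set.Ioc lo (lo + (m:ℤ) + 1)
          = insert (lo + (m:ℤ) + 1) (Set.Ioc lo (lo + (m:ℤ))) := by
        ext t
        simp only [Set.mem_Ioc, Set.mem_insert_iff]
        omega
      rw [hins, hins', Set.image_insert_eq, frk_insert, ← ih lo]
      rw [Finset.filter_insert]
      have hnotmem : (lo + (m:ℤ) + 1) ∉ (Finset.Ioc lo (lo + (m:ℤ))).filter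
          (fun c => v c ∉ span ℂ (v '' Set.Ioc lo (c - 1))) := by
        intro h
        have := (Finset.mem_filter.1 h).1
        simp only [Finset.mem_Ioc] at this
        omega
      have hkey : Set.Ioc lo (lo + (m:ℤ) + 1 - 1) = Set.Ioc lo (lo + (m:ℤ)) := by
        norm_num
      by_cases hP : v (lo + (m:ℤ) + 1) ∈ span ℂ (v '' Set.Ioc lo (lo + (m:ℤ)))
      · rw [if_neg (by simpa [hkey] using hP), if_pos hP, Nat.add_zero]
      · rw [if_pos (by simpa [hkey] using hP), if_neg hP,
          Finset.card_insert_of_notMem hnotmem]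

/-- the greedy invariant: the span of a window equals the span of its greedy subset. -/
lemma greedy_span (v : ℤ → (Fin k → ℂ)) (lo : ℤ) (m : ℕ) :
    span ℂ (v '' {b : ℤ | b ∈ Set.Ioc lo (lo + (m:ℤ)) ∧ v b ∉ span ℂ (v '' Set.Ioc lo (b - 1))})
      = span ℂ (v '' Set.Ioc lo (lo + (m:ℤ))) := by
  induction m with
  | zero => simp
  | succ m ih =>
      have hE2 : lo + (((m:ℕ)+1:ℕ):ℤ) = lo + (m:ℤ) + 1 := by push_cast; ring
      rw [hE2]
      have hins' : Set.Ioc lo (lo + (m:ℤ) + 1)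
          = insert (lo + (m:ℤ) + 1) (Set.Ioc lo (lo + (m:ℤ))) := by
        ext t
        simp only [Set.mem_Ioc, Set.mem_insert_iff]
        omega
      have hkey : Set.Ioc lo (lo + (m:ℤ) + 1 - 1) = Set.Ioc lo (lo + (m:ℤ)) := by
        norm_num
      by_cases hP : v (lo + (m:ℤ) + 1) ∈ span ℂ (v '' Set.Ioc lo (lo + (m:ℤ)))
      · have hset : {b : ℤ | b ∈ Set.Ioc lo (lo + (m:ℤ) + 1)
              ∧ v b ∉ span ℂ (v '' Set.Ioc lo (b - 1))}
            = {b : ℤ | b ∈ Set.Ioc lo (lo + (m:ℤ)) ∧ v b ∉ span ℂ (v '' Set.Ioc lo (b - 1))} := by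
          ext b
          simp only [Set.mem_setOf_eq, hins', Set.mem_insert_iff]
          constructor
          · rintro ⟨(rfl | hb), h2⟩
            · exact absurd (by simpa [hkey] using hP) h2
            · exact ⟨hb, h2⟩
          · rintro ⟨hb, h2⟩; exact ⟨Or.inr hb, h2⟩
        rw [hset, ih, hins', Set.image_insert_eq, span_insert_eq_span hP]
      · have hset : {b : ℤ | b ∈ Set.Ioc lo (lo + (m:ℤ) + 1)
              ∧ v b ∉ span ℂ (v '' Set.Ioc lo (b - 1))}
            = insert (lo + (m:ℤ) + 1)
                {b : ℤ | b ∈ Set.Ioc lo (lo + (m:ℤ)) ∧ v b ∉ span ℂ (v '' Set.Ioc lo (b - 1))} := by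
          ext b
          simp only [Set.mem_setOf_eq, hins', Set.mem_insert_iff]
          constructor
          · rintro ⟨(rfl | hb), h2⟩
            · exact Or.inl rfl
            · exact Or.inr ⟨hb, h2⟩
          · rintro (rfl | ⟨hb, h2⟩)
            · exact ⟨Or.inl rfl, by simpa [hkey] using hP⟩
            · exact ⟨Or.inr hb, h2⟩
        rw [hset, hins', Set.image_insert_eq, Set.image_insert_eq, span_insert, span_insert, ih]

end GNaux
namespace GNaux
open Submodule Set Module Matrix

variable {k n : ℕ} [NeZero n]

/-- two congruent elements of a window of length `n` coincide. -/
lemma rep_unique {t₁ t₂ lo : ℤ} (h1 : t₁ ∈ Set.Ioc lo (lo + (n:ℤ)))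
    (h2 : t₂ ∈ Set.Ioc lo (lo + (n:ℤ))) (hd : (n:ℤ) ∣ t₁ - t₂) : t₁ = t₂ := by
  have := Int.eq_zero_of_abs_lt_dvd hd (by
    simp only [Set.mem_Ioc] at h1 h2
    rw [abs_lt]
    omega)
  omega

lemma dvd_sub_colIdx (j : ℤ) : (n:ℤ) ∣ j - 1 - ((colIdx n j : Fin n) : ℤ) := by
  rw [colIdx_val, Int.emod_def]
  exact ⟨(j - 1) / n, by ring⟩

variable (X : Matrix (Fin k) (Fin n) ℂ)

lemma span_window (lo : ℤ) :
    span ℂ (extCol X '' Set.Ioc lo (lo + (n:ℤ))) = span ℂ (Set.range Xᵀ) := by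
  apply le_antisymm
  · rw [span_le]
    rintro _ ⟨t, _, rfl⟩
    rw [extCol_eq]
    exact smul_mem _ _ (subset_span ⟨colIdx n t, rfl⟩)
  · rw [span_le]
    rintro _ ⟨c, rfl⟩
    have h0 : (0:ℤ) ≤ ((c:ℤ) - lo) % (n:ℤ) := Int.emod_nonneg _ (by have := npos (n:=n); omega)
    have h1 : ((c:ℤ) - lo) % (n:ℤ) < (n:ℤ) := Int.emod_lt_of_pos _ npos
    set t := lo + 1 + ((c:ℤ) - lo) % (n:ℤ) with ht
    have htm : t ∈ Set.Ioc lo (lo + (n:ℤ)) := ⟨by omega, by omega⟩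
    have hc : colIdx n t = c := by
      have hd : (n:ℤ) ∣ ((colIdx n t : Fin n) : ℤ) - (c:ℤ) := by
        have d1 : (n:ℤ) ∣ t - 1 - ((colIdx n t : Fin n) : ℤ) := dvd_sub_colIdx t
        have d2 : (n:ℤ) ∣ t - 1 - (c:ℤ) := by
          rw [ht, Int.emod_def]
          exact ⟨-(((c:ℤ) - lo) / n), by ring⟩
        have hd3 := dvd_sub d2 d1
        rw [show (t - 1 - (c:ℤ)) - (t - 1 - ((colIdx n t : Fin n):ℤ))
            = ((colIdx n t : Fin n):ℤ) - c by ring] at hd3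
        exact hd3
      have hb1 : ((colIdx n t : Fin n) : ℤ) < n := by exact_mod_cast (colIdx n t).isLt
      have hb2 : (0:ℤ) ≤ ((colIdx n t : Fin n) : ℤ) := by positivity
      have hb3 : ((c:ℤ)) < n := by exact_mod_cast c.isLt
      have := Int.eq_zero_of_abs_lt_dvd hd (by rw [abs_lt]; omega)
      have : ((colIdx n t : Fin n) : ℤ) = (c:ℤ) := by omega
      exact Fin.ext (by exact_mod_cast this)
    have hx : Xᵀ c = (sg k ^ ((t - 1) / (n:ℤ)))⁻¹ • extCol X t := by
      rw [extCol_eq, hc, smul_smul, inv_mul_cancel₀ (sg_zpow_ne _), one_smul]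
    rw [hx]
    exact smul_mem _ _ (subset_span ⟨t, htm, rfl⟩)

lemma finrank_window (hX : X.rank = k) (lo : ℤ) :
    finrank ℂ (span ℂ (extCol X '' Set.Ioc lo (lo + (n:ℤ))) : Submodule ℂ (Fin k → ℂ)) = k := by
  rw [span_window]
  rw [Matrix.rank_eq_finrank_span_cols] at hX
  exact hX

lemma span_window_top (hX : X.rank = k) (lo : ℤ) :
    span ℂ (extCol X '' Set.Ioc lo (lo + (n:ℤ))) = (⊤ : Submodule ℂ (Fin k → ℂ)) := by
  apply Submodule.eq_top_of_finrank_eq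
  rw [finrank_window X hX, finrank_fin_fun]

end GNaux
set_option linter.unusedSectionVars false
namespace GNaux
open Submodule Set Module Matrix
open scoped Classical

variable {k n : ℕ} [NeZero n]

/-- the representative of `x` in `{1,…,n}`. -/
def red (n : ℕ) [NeZero n] (x : ℤ) : ℤ := (x - 1) % (n:ℤ) + 1

lemma red_mem (x : ℤ) : red n x ∈ Finset.Icc (1:ℤ) (n:ℤ) := by
  have h1 : 0 ≤ (x - 1) % (n : ℤ) := Int.emod_nonneg _ (by have := npos (n:=n); omega)
  have h2 : (x - 1) % (n : ℤ) < (n : ℤ) := Int.emod_lt_of_pos _ npos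
  simp only [Finset.mem_Icc, red]
  omega

lemma red_dvd (x : ℤ) : (n:ℤ) ∣ x - red n x := by
  rw [red, Int.emod_def]
  exact ⟨(x - 1) / n, by ring⟩

lemma red_unique {x r : ℤ} (hr : r ∈ Finset.Icc (1:ℤ) (n:ℤ)) (hd : (n:ℤ) ∣ x - r) :
    r = red n x := by
  have h1 := red_mem (n := n) x
  simp only [Finset.mem_Icc] at hr h1
  refine rep_unique (n := n) (t₁ := r) (t₂ := red n x) (lo := (0:ℤ)) ⟨by omega, by omega⟩ ⟨by omega, by omega⟩ ?_
  have := dvd_sub hd (red_dvd (n := n) x)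
  rw [show x - r - (x - red n x) = red n x - r by ring] at this
  exact (dvd_sub_comm).1 this

lemma mem_necklace {f : ℤ → ℤ} {A r : ℤ} :
    r ∈ necklaceOf n f A
      ↔ r ∈ Finset.Icc (1:ℤ) (n:ℤ) ∧ ∃ b : ℤ, b < A ∧ A ≤ f b ∧ (n : ℤ) ∣ (f b - r) := by
  simp [necklaceOf, Finset.mem_filter]

variable (X : Matrix (Fin k) (Fin n) ℂ)

lemma fX_ge_iff {b t : ℤ} (hbt : b ≤ t) :
    t + 1 ≤ fX X b ↔ extCol X b ∉ span ℂ (extCol X '' Set.Ioc b t) := by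
  rw [← fX_le_iff X hbt]
  omega

/-- the auxiliary finset of witnesses. -/
def Bset (X : Matrix (Fin k) (Fin n) ℂ) (A : ℤ) : Finset ℤ :=
  (Finset.Ioc (A - 1 - (n:ℤ)) (A - 1)).filter (fun b => A ≤ fX X b)

lemma necklace_eq_image (A : ℤ) :
    necklaceOf n (fX X) A = (Bset X A).image (fun b => red n (fX X b)) := by
  ext r
  rw [mem_necklace]
  simp only [Finset.mem_image, Bset, Finset.mem_filter, Finset.mem_Ioc]
  constructor
  · rintro ⟨hr, b, hb1, hb2, hb3⟩
    refine ⟨b, ⟨⟨?_, by omega⟩, hb2⟩, (red_unique hr hb3).symm⟩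
    have := fX_le_add_n X b
    omega
  · rintro ⟨b, ⟨⟨hb1, hb2⟩, hb3⟩, rfl⟩
    exact ⟨red_mem _, b, by omega, hb3, red_dvd _⟩

lemma fX_mem_window {A b : ℤ} (hb : b ∈ Bset X A) :
    fX X b ∈ Set.Ioc (A - 1) (A - 1 + (n:ℤ)) := by
  simp only [Bset, Finset.mem_filter, Finset.mem_Ioc] at hb
  have := fX_le_add_n X b
  exact ⟨by omega, by omega⟩

lemma Bset_injOn (A : ℤ) :
    Set.InjOn (fun b => red n (fX X b)) (Bset X A) := by
  intro b₁ h1 b₂ h2 he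
  by_contra hne
  have hw1 := fX_mem_window X h1
  have hw2 := fX_mem_window X h2
  have hd : (n:ℤ) ∣ fX X b₁ - fX X b₂ := by
    have d1 := red_dvd (n := n) (fX X b₁)
    have d2 := red_dvd (n := n) (fX X b₂)
    simp only at he
    have := dvd_sub d1 d2
    rw [he, show fX X b₁ - red n (fX X b₂) - (fX X b₂ - red n (fX X b₂))
        = fX X b₁ - fX X b₂ by ring] at this
    exact this
  have heq : fX X b₁ = fX X b₂ := rep_unique hw1 hw2 hd
  simp only [Bset, Finset.mem_coe, Finset.mem_filter, Finset.mem_Ioc] at h1 h2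
  rcases lt_trichotomy b₁ b₂ with h | h | h
  · exact fX_injOn X h (by omega) heq
  · exact hne h
  · exact fX_injOn X h (by omega) heq.symm

lemma Bset_card (hX : X.rank = k) (A : ℤ) : (Bset X A).card = k := by
  have hc := count_right (extCol X) n (A - 1 - (n:ℤ))
  have he : A - 1 - (n:ℤ) + (n:ℤ) = A - 1 := by ring
  rw [he] at hc
  have : Bset X A = (Finset.Ioc (A - 1 - (n:ℤ)) (A - 1)).filter
      (fun b => extCol X b ∉ span ℂ (extCol X '' Set.Ioc b (A - 1))) := by
    apply Finset.filter_congr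
    intro b hb
    simp only [Finset.mem_Ioc] at hb
    have h2 : A ≤ fX X b ↔ (A - 1) + 1 ≤ fX X b := by constructor <;> intro <;> omega
    rw [h2, fX_ge_iff X (show b ≤ A - 1 by omega)]
  rw [this, hc]
  have := finrank_window X hX (A - 1 - (n:ℤ))
  rw [he] at this
  exact this

lemma necklace_card (hX : X.rank = k) (A : ℤ) : (necklaceOf n (fX X) A).card = k := by
  rw [necklace_eq_image, Finset.card_image_of_injOn (Bset_injOn X A), Bset_card X hX A]

end GNaux
namespace GNaux
open Submodule Set Module Matrix
open scoped Classical

variable {k n : ℕ} [NeZero n] (X : Matrix (Fin k) (Fin n) ℂ)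

lemma necklace_periodic (a : ℤ) :
    necklaceOf n (fX X) (a + (n:ℤ)) = necklaceOf n (fX X) a := by
  ext r
  rw [mem_necklace, mem_necklace]
  constructor
  · rintro ⟨hr, b, hb1, hb2, hb3⟩
    refine ⟨hr, b - n, by omega, ?_, ?_⟩
    · have : fX X (b - n) + n = fX X b := by
        rw [← fX_add_n X (b - n)]; ring_nf
      omega
    · have h4 : fX X (b - n) + n = fX X b := by
        rw [← fX_add_n X (b - n)]; ring_nf
      have : fX X (b - n) - r = (fX X b - r) - n := by omega
      rw [this]
      exact dvd_sub hb3 ⟨1, by ring⟩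
  · rintro ⟨hr, b, hb1, hb2, hb3⟩
    refine ⟨hr, b + n, by omega, ?_, ?_⟩
    · rw [fX_add_n]; omega
    · rw [fX_add_n, show fX X b + n - r = (fX X b - r) + n by ring]
      exact dvd_add hb3 ⟨1, by ring⟩

lemma mem_necklace_self_iff {a : ℤ} (ha : a ∈ Finset.Icc (1:ℤ) (n:ℤ)) :
    a ∈ necklaceOf n (fX X) a ↔ ∃ b : ℤ, b < a ∧ fX X b = a := by
  simp only [Finset.mem_Icc] at ha
  rw [mem_necklace]
  constructor
  · rintro ⟨_, b, hb1, hb2, hb3⟩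
    refine ⟨b, hb1, ?_⟩
    have hle := fX_le_add_n X b
    exact rep_unique (lo := a - 1) ⟨by omega, by omega⟩ ⟨by omega, by omega⟩ hb3
  · rintro ⟨b, hb1, hb2⟩
    exact ⟨by simp only [Finset.mem_Icc]; omega, b, hb1, by omega, by rw [hb2]; simp⟩

lemma fX_gt_of_hit {b a : ℤ} (hb : b < a) (hf : fX X b = a) : a + 1 ≤ fX X a := by
  have h1 : extCol X b ∈ span ℂ (extCol X '' Set.Ioc b a) := by
    rw [← hf]; exact fX_mem_span X b
  have h2 : extCol X b ∉ span ℂ (extCol X '' Set.Ioc b (a - 1)) :=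
    not_mem_span_of_lt_fX X (by omega) (by omega)
  have hne : fX X a ≠ a := by
    intro h
    have hmem := fX_mem_span X a
    rw [h, Set.Ioc_self, Set.image_empty, span_empty, Submodule.mem_bot] at hmem
    have hioc : Set.Ioc b a = insert a (Set.Ioc b (a - 1)) := by
      ext t; simp only [Set.mem_Ioc, Set.mem_insert_iff]; omega
    rw [hioc, Set.image_insert_eq, hmem, span_insert_zero] at h1
    exact h2 h1
  have := le_fX X a
  omega

lemma isGN_necklace (hX : X.rank = k) : IsGN k n (necklaceOf n (fX X)) := by
  refine ⟨necklace_periodic X, fun a => Finset.filter_subset _ _,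
    necklace_card X hX, fun a ha => ⟨?_, ?_⟩⟩
  · -- a ∉ I a → I (a+1) = I a
    intro hnot
    refine (Finset.eq_of_subset_of_card_le ?_ ?_).symm
    · intro r hr
      rw [mem_necklace] at hr
      obtain ⟨hr1, b, hb1, hb2, hb3⟩ := hr
      rw [mem_necklace]
      refine ⟨hr1, b, by omega, ?_, hb3⟩
      have : fX X b ≠ a := by
        intro h
        exact hnot ((mem_necklace_self_iff X ha).2 ⟨b, hb1, h⟩)
      omega
    · rw [necklace_card X hX, necklace_card X hX]
  · -- a ∈ I a → insert case
    intro hmem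
    obtain ⟨b0, hb0, hf0⟩ := (mem_necklace_self_iff X ha).1 hmem
    have hfa : a + 1 ≤ fX X a := fX_gt_of_hit X hb0 hf0
    simp only [Finset.mem_Icc] at ha
    refine ⟨red n (fX X a), red_mem _, ?_⟩
    ext r
    rw [mem_necklace, Finset.mem_insert, Finset.mem_erase, mem_necklace]
    constructor
    · rintro ⟨hr1, b, hb1, hb2, hb3⟩
      rcases eq_or_lt_of_le (show b ≤ a by omega) with rfl | hlt
      · exact Or.inl (red_unique hr1 hb3)
      · refine Or.inr ⟨?_, hr1, b, hlt, by omega, hb3⟩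
        intro hra
        rw [hra] at hb3
        have hle := fX_le_add_n X b
        have := Int.eq_zero_of_abs_lt_dvd hb3 (by rw [abs_lt]; omega)
        omega
    · rintro (rfl | ⟨hra, hr1, b, hb1, hb2, hb3⟩)
      · exact ⟨red_mem _, a, by omega, hfa, red_dvd _⟩
      · refine ⟨hr1, b, by omega, ?_, hb3⟩
        have : fX X b ≠ a := by
          intro h
          rw [h] at hb3
          simp only [Finset.mem_Icc] at hr1
          exact hra (rep_unique (lo := (0:ℤ)) ⟨by omega, by omega⟩
            ⟨by omega, by omega⟩ hb3).symm
        omega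

end GNaux
namespace GNaux
open Submodule Set Module Matrix
open scoped Classical

variable {k n : ℕ} [NeZero n]

/-- the integer position of column `c` in the rotated order starting at `a`. -/
def pos (a c : Fin n) : ℤ := (a : ℤ) + 1 + ((c - a : Fin n) : ℤ)

lemma pos_mem (a c : Fin n) : pos a c ∈ Set.Ioc ((a:ℤ)) ((a:ℤ) + (n:ℤ)) := by
  have h1 : ((c - a : Fin n) : ℕ) < n := (c - a).isLt
  have h2 : (0:ℤ) ≤ ((c - a : Fin n) : ℤ) := by positivity
  have h1' : ((c - a : Fin n) : ℤ) < (n:ℤ) := by exact_mod_cast h1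
  simp only [pos, Set.mem_Ioc]
  omega

lemma pos_sub_val (a c : Fin n) :
    ((c - a : Fin n) : ℤ) = if (a:ℕ) ≤ (c:ℕ) then (c:ℤ) - (a:ℤ) else (c:ℤ) - (a:ℤ) + n := by
  have hsub : ((c - a : Fin n) : ℕ) = ((c:ℕ) + (n - (a:ℕ))) % n := by
    rw [Fin.sub_def]
    simp [Nat.add_comm]
  have han : (a:ℕ) ≤ n := le_of_lt a.isLt
  have hcn : (c:ℕ) < n := c.isLt
  by_cases h : (a:ℕ) ≤ (c:ℕ)
  · rw [if_pos h]
    have : (c:ℕ) + (n - (a:ℕ)) = ((c:ℕ) - (a:ℕ)) + n := by omega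
    rw [this, Nat.add_mod_right, Nat.mod_eq_of_lt (by omega)] at hsub
    have : ((c - a : Fin n) : ℤ) = (((c:ℕ) - (a:ℕ) : ℕ) : ℤ) := by exact_mod_cast hsub
    rw [this]
    omega
  · rw [if_neg h]
    have : (c:ℕ) + (n - (a:ℕ)) < n := by omega
    rw [Nat.mod_eq_of_lt this] at hsub
    have : ((c - a : Fin n) : ℤ) = (((c:ℕ) + (n - (a:ℕ)) : ℕ) : ℤ) := by exact_mod_cast hsub
    rw [this]
    push_cast
    omega

lemma pos_dvd (a c : Fin n) : (n:ℤ) ∣ pos a c - ((c:ℤ) + 1) := by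
  rw [pos, pos_sub_val]
  by_cases h : (a:ℕ) ≤ (c:ℕ)
  · rw [if_pos h]; exact ⟨0, by ring⟩
  · rw [if_neg h]; exact ⟨1, by ring⟩

lemma colIdx_pos (a c : Fin n) : colIdx n (pos a c) = c := by
  have hd1 : (n:ℤ) ∣ pos a c - 1 - ((colIdx n (pos a c) : Fin n) : ℤ) := dvd_sub_colIdx _
  have hd2 : (n:ℤ) ∣ pos a c - ((c:ℤ) + 1) := pos_dvd a c
  have hd : (n:ℤ) ∣ ((colIdx n (pos a c) : Fin n) : ℤ) - (c:ℤ) := by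
    have := dvd_sub hd2 hd1
    rw [show pos a c - ((c:ℤ)+1) - (pos a c - 1 - ((colIdx n (pos a c) : Fin n) : ℤ))
        = ((colIdx n (pos a c) : Fin n) : ℤ) - c by ring] at this
    exact this
  have hb1 : ((colIdx n (pos a c) : Fin n) : ℤ) < n := by
    exact_mod_cast (colIdx n (pos a c)).isLt
  have hb2 : (0:ℤ) ≤ ((colIdx n (pos a c) : Fin n) : ℤ) := by positivity
  have hb3 : ((c:ℤ)) < n := by exact_mod_cast c.isLt
  have hb4 : (0:ℤ) ≤ (c:ℤ) := by positivity
  have := Int.eq_zero_of_abs_lt_dvd hd (by rw [abs_lt]; omega)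
  exact Fin.ext (by omega)

lemma pos_inj (a : Fin n) : Function.Injective (pos a) := by
  intro c₁ c₂ h
  have := colIdx_pos a c₁
  rw [h, colIdx_pos] at this
  exact this.symm

lemma pos_surj (a : Fin n) {t : ℤ} (ht : t ∈ Set.Ioc ((a:ℤ)) ((a:ℤ) + (n:ℤ))) :
    pos a (colIdx n t) = t := by
  refine rep_unique (pos_mem a _) ht ?_
  have hd1 : (n:ℤ) ∣ pos a (colIdx n t) - (((colIdx n t : Fin n):ℤ) + 1) := pos_dvd a _
  have hd2 : (n:ℤ) ∣ t - 1 - ((colIdx n t : Fin n) : ℤ) := dvd_sub_colIdx t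
  have := dvd_sub hd1 hd2
  rw [show pos a (colIdx n t) - (((colIdx n t : Fin n):ℤ) + 1) - (t - 1 - ((colIdx n t : Fin n) : ℤ))
      = pos a (colIdx n t) - t by ring] at this
  exact this

lemma pos_lt_iff (a c c' : Fin n) : pos a c < pos a c' ↔ (c - a : Fin n) < (c' - a : Fin n) := by
  rw [pos, pos, Fin.lt_def]
  constructor
  · intro h
    have : ((c - a : Fin n) : ℤ) < ((c' - a : Fin n) : ℤ) := by omega
    exact_mod_cast this
  · intro h
    have : ((c - a : Fin n) : ℤ) < ((c' - a : Fin n) : ℤ) := by exact_mod_cast h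
    omega

end GNaux
namespace GNaux
open Submodule Set Module Matrix
open scoped Classical

variable {k n : ℕ} [NeZero n] (X : Matrix (Fin k) (Fin n) ℂ)

/-- the greedy (lexicographically minimal) basis in the rotated order starting at `a`. -/
def Ma (X : Matrix (Fin k) (Fin n) ℂ) (a : Fin n) : Finset (Fin n) :=
  Finset.univ.filter
    (fun c => extCol X (pos a c) ∉ span ℂ (extCol X '' Set.Ioc ((a:ℤ)) (pos a c - 1)))

lemma mem_Ma {a c : Fin n} :
    c ∈ Ma X a ↔ extCol X (pos a c) ∉ span ℂ (extCol X '' Set.Ioc ((a:ℤ)) (pos a c - 1)) := by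
  simp [Ma]

/-- the right-hand set of positions. -/
def Rset (X : Matrix (Fin k) (Fin n) ℂ) (a : Fin n) : Finset ℤ :=
  (Finset.Ioc ((a:ℤ)) ((a:ℤ) + (n:ℤ))).filter
    (fun t => extCol X t ∉ span ℂ (extCol X '' Set.Ioc ((a:ℤ)) (t - 1)))

lemma mem_Rset_pos {a c : Fin n} : pos a c ∈ Rset X a ↔ c ∈ Ma X a := by
  have hm := pos_mem a c
  simp only [Rset, Finset.mem_filter, Finset.mem_Ioc, mem_Ma]
  simp only [Set.mem_Ioc] at hm
  constructor
  · rintro ⟨_, h⟩; exact h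
  · intro h; exact ⟨⟨hm.1, hm.2⟩, h⟩

lemma Ma_card_eq_Rset : (Ma X a).card = (Rset X a).card := by
  apply Finset.card_bij (fun c _ => pos a c)
  · intro c hc
    exact (mem_Rset_pos X).2 hc
  · intro c₁ _ c₂ _ h
    exact pos_inj a h
  · intro t ht
    have htm : t ∈ Set.Ioc ((a:ℤ)) ((a:ℤ) + (n:ℤ)) := by
      have := (Finset.mem_filter.1 ht).1
      simpa [Finset.mem_Ioc, Set.mem_Ioc] using this
    refine ⟨colIdx n t, ?_, pos_surj a htm⟩
    rw [← mem_Rset_pos X, pos_surj a htm]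
    exact ht

lemma Rset_card (hX : X.rank = k) (a : Fin n) : (Rset X a).card = k := by
  have hc := count_left (extCol X) n ((a:ℤ))
  rw [Rset]
  rw [hc, finrank_window X hX]

lemma Ma_card (hX : X.rank = k) (a : Fin n) : (Ma X a).card = k := by
  rw [Ma_card_eq_Rset, Rset_card X hX]

lemma Ma_span_top (hX : X.rank = k) (a : Fin n) :
    span ℂ (Set.range (fun c : {x // x ∈ Ma X a} => extCol X (pos a (c : Fin n)))) = ⊤ := by
  have himg : Set.range (fun c : {x // x ∈ Ma X a} => extCol X (pos a (c : Fin n)))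
      = extCol X '' (pos a '' (Ma X a : Set (Fin n))) := by
    ext x
    constructor
    · rintro ⟨⟨c, hc⟩, rfl⟩; exact ⟨pos a c, ⟨c, hc, rfl⟩, rfl⟩
    · rintro ⟨_, ⟨c, hc, rfl⟩, rfl⟩; exact ⟨⟨c, hc⟩, rfl⟩
  have hset : pos a '' (Ma X a : Set (Fin n))
      = {b : ℤ | b ∈ Set.Ioc ((a:ℤ)) ((a:ℤ) + (n:ℤ))
          ∧ extCol X b ∉ span ℂ (extCol X '' Set.Ioc ((a:ℤ)) (b - 1))} := by
    ext t
    constructor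
    · rintro ⟨c, hc, rfl⟩
      rw [Finset.mem_coe, mem_Ma] at hc
      exact ⟨pos_mem a c, hc⟩
    · rintro ⟨ht1, ht2⟩
      refine ⟨colIdx n t, ?_, pos_surj a ht1⟩
      rw [Finset.mem_coe, mem_Ma, pos_surj a ht1]
      exact ht2
  rw [himg, hset, greedy_span (extCol X) ((a:ℤ)) n, span_window_top X hX]

lemma Ma_indep (hX : X.rank = k) (a : Fin n) :
    LinearIndependent ℂ (fun c : {x // x ∈ Ma X a} => Xᵀ (c : Fin n)) := by
  have h1 : LinearIndependent ℂ (fun c : {x // x ∈ Ma X a} => extCol X (pos a (c : Fin n))) := by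
    apply linearIndependent_of_top_le_span_of_card_eq_finrank
    · rw [Ma_span_top X hX]
    · rw [Fintype.card_coe, Ma_card X hX, finrank_fin_fun]
  have h2 : (fun c : {x // x ∈ Ma X a} => Xᵀ (c : Fin n))
      = fun c : {x // x ∈ Ma X a} =>
          ((Units.mk0 (sg k ^ ((pos a (c : Fin n) - 1) / (n:ℤ))) (sg_zpow_ne _))⁻¹ : ℂˣ)
            • extCol X (pos a (c : Fin n)) := by
    funext c
    rw [extCol_eq, colIdx_pos]
    simp only [Units.smul_def]
    rw [smul_smul, Units.val_inv_eq_inv_val, Units.val_mk0,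
      inv_mul_cancel₀ (sg_zpow_ne _), one_smul]
  rw [h2]
  exact h1.units_smul _

lemma plk_ne_iff (J : Finset (Fin n)) (hJ : J.card = k) :
    plk X J ≠ 0 ↔ LinearIndependent ℂ (fun j : {x // x ∈ J} => Xᵀ (j : Fin n)) := by
  rw [plk, dif_pos hJ]
  rw [← isUnit_iff_ne_zero, ← Matrix.isUnit_iff_isUnit_det]
  rw [← Matrix.linearIndependent_cols_iff_isUnit]
  have heq : (fun i : Fin k => (X.submatrix id (J.orderEmbOfFin hJ))ᵀ i)
      = (fun j : {x // x ∈ J} => Xᵀ (j : Fin n)) ∘ ⇑(J.orderIsoOfFin hJ).toEquiv := by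
    funext i
    funext r
    simp [Matrix.transpose_apply, Matrix.submatrix_apply, Finset.coe_orderIsoOfFin_apply]
  rw [show (X.submatrix id fun r => (J.orderEmbOfFin hJ) r).col = _ from heq, linearIndependent_equiv]

lemma plk_Ma_ne (hX : X.rank = k) (a : Fin n) : plk X (Ma X a) ≠ 0 := by
  rw [plk_ne_iff X _ (Ma_card X hX a)]
  exact Ma_indep X hX a

end GNaux
namespace GNaux
open Submodule Set Module Matrix
open scoped Classical

variable {k n : ℕ} [NeZero n] (X : Matrix (Fin k) (Fin n) ℂ)

lemma Ma_min (hX : X.rank = k) (a : Fin n) (J : Finset (Fin n)) (hJ : J.card = k)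
    (hJp : plk X J ≠ 0) : cyclexLE a (Ma X a) J := by
  by_cases hMJ : Ma X a = J
  · exact Or.inl hMJ
  right
  have hli := (plk_ne_iff X J hJ).1 hJp
  have hinj : Function.Injective (fun c : Fin n => c - a) := by
    intro c₁ c₂ h
    simpa [sub_left_inj] using h
  set S := (Ma X a).image (· - a) with hS
  set T := J.image (· - a) with hT
  have hST : S ≠ T := fun he => hMJ (Finset.image_injective hinj he)
  have hU : ((S \ T) ∪ (T \ S)).Nonempty := by
    rw [Finset.nonempty_iff_ne_empty]
    intro he
    rw [Finset.union_eq_empty] at he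
    exact hST (le_antisymm
      ((Finset.sdiff_eq_empty_iff_subset).1 he.1)
      ((Finset.sdiff_eq_empty_iff_subset).1 he.2))
  set y := ((S \ T) ∪ (T \ S)).min' hU with hy
  have hymem : y ∈ S \ T := by
    have hym := Finset.min'_mem _ hU
    rcases Finset.mem_union.1 hym with h | h
    · exact h
    exfalso
    obtain ⟨hyT, hyS⟩ := Finset.mem_sdiff.1 h
    obtain ⟨c, hcJ, hcρ⟩ := Finset.mem_image.1 hyT
    have hcM : c ∉ Ma X a := fun hc => hyS (Finset.mem_image.2 ⟨c, hc, hcρ⟩)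
    rw [mem_Ma, not_not] at hcM
    have hpm := pos_mem a c
    simp only [Set.mem_Ioc] at hpm
    have hm : (0:ℤ) ≤ pos a c - 1 - (a:ℤ) := by omega
    have hg := greedy_span (extCol X) ((a:ℤ)) (pos a c - 1 - (a:ℤ)).toNat
    rw [show ((a:ℤ) + ((pos a c - 1 - (a:ℤ)).toNat : ℤ)) = pos a c - 1 by omega] at hg
    rw [← hg] at hcM
    have hle : span ℂ (extCol X '' {b : ℤ | b ∈ Set.Ioc ((a:ℤ)) (pos a c - 1)
          ∧ extCol X b ∉ span ℂ (extCol X '' Set.Ioc ((a:ℤ)) (b - 1))})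
        ≤ span ℂ ((fun j : Fin n => Xᵀ j) '' ((J : Set (Fin n)) \ {c})) := by
      rw [span_le]
      rintro x ⟨b, ⟨hb1, hb2⟩, rfl⟩
      obtain ⟨hb1a, hb1b⟩ := hb1
      have hbw : b ∈ Set.Ioc ((a:ℤ)) ((a:ℤ) + (n:ℤ)) := ⟨hb1a, by omega⟩
      have hpc' : pos a (colIdx n b) = b := pos_surj a hbw
      have hc'M : colIdx n b ∈ Ma X a := by rw [mem_Ma, hpc']; exact hb2
      have hlt : pos a (colIdx n b) < pos a c := by rw [hpc']; omega
      have hρlt : (colIdx n b - a) < (c - a) := (pos_lt_iff a _ c).1 hlt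
      have hc'S : (colIdx n b - a) ∈ S := Finset.mem_image.2 ⟨colIdx n b, hc'M, rfl⟩
      have hc'T : (colIdx n b - a) ∈ T := by
        by_contra hnot
        have hmemU : (colIdx n b - a) ∈ (S \ T) ∪ (T \ S) :=
          Finset.mem_union_left _ (Finset.mem_sdiff.2 ⟨hc'S, hnot⟩)
        have hymin := Finset.min'_le _ _ hmemU
        have h3 : (c - a : Fin n) ≤ colIdx n b - a := by rw [hcρ]; exact hymin
        exact absurd (lt_of_lt_of_le hρlt h3) (lt_irrefl _)
      obtain ⟨c'', hc''J, hc''ρ⟩ := Finset.mem_image.1 hc'T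
      have hc'J : colIdx n b ∈ J := by rwa [hinj hc''ρ] at hc''J
      have hc'ne : colIdx n b ≠ c := by
        intro he
        rw [he] at hρlt
        exact lt_irrefl _ hρlt
      rw [← hpc', extCol_eq, colIdx_pos]
      exact smul_mem _ _ (subset_span ⟨colIdx n b, ⟨hc'J, hc'ne⟩, rfl⟩)
    have hmem2 : extCol X (pos a c)
        ∈ span ℂ ((fun j : Fin n => Xᵀ j) '' ((J : Set (Fin n)) \ {c})) := hle hcM
    have hXc : Xᵀ c ∈ span ℂ ((fun j : Fin n => Xᵀ j) '' ((J : Set (Fin n)) \ {c})) := by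
      have heq : Xᵀ c = (sg k ^ ((pos a c - 1)/(n:ℤ)))⁻¹ • extCol X (pos a c) := by
        rw [extCol_eq, colIdx_pos, smul_smul, inv_mul_cancel₀ (sg_zpow_ne _), one_smul]
      rw [heq]
      exact smul_mem _ _ hmem2
    have himg : (fun j : {x // x ∈ J} => Xᵀ (j : Fin n)) '' {j : {x // x ∈ J} | (j : Fin n) ≠ c}
        = (fun j : Fin n => Xᵀ j) '' ((J : Set (Fin n)) \ {c}) := by
      ext x; constructor
      · rintro ⟨⟨j, hj⟩, hne, rfl⟩
        exact ⟨j, ⟨hj, hne⟩, rfl⟩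
      · rintro ⟨j, ⟨hj, hne⟩, rfl⟩
        exact ⟨⟨j, hj⟩, hne, rfl⟩
    have hns := hli.notMem_span_image
      (s := {j : {x // x ∈ J} | (j : Fin n) ≠ c}) (x := ⟨c, hcJ⟩) (by simp)
    rw [himg] at hns
    exact hns hXc
  refine ⟨y, hymem, ?_⟩
  intro x hx
  have hxU : x ∈ (S \ T) ∪ (T \ S) := Finset.mem_union_right _ hx
  have hyx : y ≤ x := Finset.min'_le _ _ hxU
  have hne : y ≠ x := by
    intro he
    obtain ⟨_, hyT⟩ := Finset.mem_sdiff.1 hymem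
    obtain ⟨hxT, _⟩ := Finset.mem_sdiff.1 hx
    exact hyT (he ▸ hxT)
  exact lt_of_le_of_ne hyx hne

lemma min_unique (a : Fin n) (M M' : Finset (Fin n)) (h1 : cyclexLE a M M')
    (h2 : cyclexLE a M' M) : M = M' := by
  rcases h1 with h1 | ⟨y, hy, hmin⟩
  · exact h1
  rcases h2 with h2 | ⟨y', hy', hmin'⟩
  · exact h2.symm
  exfalso
  have l1 := hmin y' hy'
  have l2 := hmin' y hy
  exact absurd (lt_trans l1 l2) (lt_irrefl _)

end GNaux
namespace GNaux
open Submodule Set Module Matrix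
open scoped Classical

variable {k n : ℕ} [NeZero n] (X : Matrix (Fin k) (Fin n) ℂ)

/-- the positions hit by `fX` from below the threshold. -/
def Lset (X : Matrix (Fin k) (Fin n) ℂ) (a : Fin n) : Finset ℤ :=
  (Finset.Ioc ((a:ℤ)) ((a:ℤ) + (n:ℤ))).filter (fun t => ∃ b : ℤ, b < (a:ℤ) + 1 ∧ fX X b = t)

lemma Lset_subset_Rset (a : Fin n) : Lset X a ⊆ Rset X a := by
  intro t ht
  simp only [Lset, Finset.mem_filter, Finset.mem_Ioc] at ht
  obtain ⟨⟨ht1, ht2⟩, b, hb1, hb2⟩ := ht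
  simp only [Rset, Finset.mem_filter, Finset.mem_Ioc]
  exact ⟨⟨ht1, ht2⟩, keyA X (by omega) (by omega) hb2⟩

lemma Lset_eq_image (a : Fin n) : Lset X a = (Bset X ((a:ℤ) + 1)).image (fX X) := by
  ext t
  simp only [Lset, Bset, Finset.mem_image, Finset.mem_filter, Finset.mem_Ioc]
  constructor
  · rintro ⟨⟨ht1, ht2⟩, b, hb1, hb2⟩
    have hle := fX_le_add_n X b
    exact ⟨b, ⟨⟨by omega, by omega⟩, by omega⟩, hb2⟩
  · rintro ⟨b, ⟨⟨hb1, hb2⟩, hb3⟩, rfl⟩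
    have hle := fX_le_add_n X b
    exact ⟨⟨by omega, by omega⟩, b, by omega, rfl⟩

lemma Lset_card (hX : X.rank = k) (a : Fin n) : (Lset X a).card = k := by
  rw [Lset_eq_image]
  rw [Finset.card_image_of_injOn, Bset_card X hX]
  intro b₁ h1 b₂ h2 he
  simp only [Bset, Finset.mem_coe, Finset.mem_filter, Finset.mem_Ioc] at h1 h2
  by_contra hne
  rcases lt_trichotomy b₁ b₂ with h | h | h
  · exact fX_injOn X h (by omega) he
  · exact hne h
  · exact fX_injOn X h (by omega) he.symm

lemma Lset_eq_Rset (hX : X.rank = k) (a : Fin n) : Lset X a = Rset X a :=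
  Finset.eq_of_subset_of_card_le (Lset_subset_Rset X a)
    (by rw [Lset_card X hX, Rset_card X hX])

lemma Ma_image (hX : X.rank = k) (a : Fin n) :
    (Ma X a).image (fun i : Fin n => ((i:ℤ) + 1)) = necklaceOf n (fX X) ((a:ℤ) + 1) := by
  ext r
  simp only [Finset.mem_image]
  constructor
  · rintro ⟨c, hc, rfl⟩
    have hR : pos a c ∈ Rset X a := (mem_Rset_pos X).2 hc
    rw [← Lset_eq_Rset X hX] at hR
    simp only [Lset, Finset.mem_filter, Finset.mem_Ioc] at hR
    obtain ⟨⟨hp1, hp2⟩, b, hb1, hb2⟩ := hR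
    rw [mem_necklace]
    have h0 : (0:ℤ) ≤ ((c : Fin n) : ℤ) := by positivity
    have h1 : ((c : Fin n) : ℤ) < (n:ℤ) := by exact_mod_cast c.isLt
    refine ⟨by simp only [Finset.mem_Icc]; omega, b, hb1, by omega, ?_⟩
    rw [hb2]
    exact pos_dvd a c
  · intro hr
    rw [mem_necklace] at hr
    obtain ⟨hr1, b, hb1, hb2, hb3⟩ := hr
    simp only [Finset.mem_Icc] at hr1
    have hcn : (r - 1).toNat < n := by omega
    set c : Fin n := ⟨(r - 1).toNat, hcn⟩ with hcdef
    have hv : (c : ℕ) = (r - 1).toNat := rfl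
    have hv2 : ((c : Fin n) : ℤ) = (((r - 1).toNat : ℕ) : ℤ) := by exact_mod_cast hv
    have hcr : ((c : Fin n) : ℤ) + 1 = r := by omega
    have hfw : fX X b ∈ Set.Ioc ((a:ℤ)) ((a:ℤ) + (n:ℤ)) :=
      ⟨by omega, by have := fX_le_add_n X b; omega⟩
    have hdvd : (n:ℤ) ∣ fX X b - pos a c := by
      have d1 := pos_dvd a c
      have hd := dvd_sub hb3 d1
      rw [show fX X b - r - (pos a c - (((c : Fin n):ℤ) + 1)) = fX X b - pos a c by omega] at hd
      exact hd
    have hfp : fX X b = pos a c := rep_unique hfw (pos_mem a c) hdvd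
    have hL : pos a c ∈ Lset X a := by
      simp only [Lset, Finset.mem_filter, Finset.mem_Ioc]
      have hpm := pos_mem a c
      simp only [Set.mem_Ioc] at hpm
      exact ⟨⟨hpm.1, hpm.2⟩, b, hb1, hfp⟩
    rw [Lset_eq_Rset X hX] at hL
    exact ⟨c, (mem_Rset_pos X).1 hL, hcr⟩

end GNaux
end

/-- The Grassmann necklace of a point agrees with the Grassmann necklace of its bounded
affine permutation: the lexicographic (w.r.t. `≤_a`) minima `I_a(X)` of the nonvanishing
Plücker coordinates exist, they form a Grassmann necklace, and
`I_a(X) = I_a(f_X)` for every `a ∈ {1,…,n}` (here `a : Fin n` is the 0-indexed label of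
the column `a+1 ∈ {1,…,n}`). -/
theorem necklace_of_point_eq_necklace_of_fX {k n : ℕ} [NeZero n]
    (X : Matrix (Fin k) (Fin n) ℂ) (hX : X.rank = k) :
    IsGN k n (necklaceOf n (fX X)) ∧
    (∀ a : Fin n, ∃ M : Finset (Fin n), M.card = k ∧ plk X M ≠ 0 ∧
        ∀ J : Finset (Fin n), J.card = k → plk X J ≠ 0 → cyclexLE a M J) ∧
    (∀ (a : Fin n) (M : Finset (Fin n)),
      (M.card = k ∧ plk X M ≠ 0 ∧
        ∀ J : Finset (Fin n), J.card = k → plk X J ≠ 0 → cyclexLE a M J) →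
      Finset.image (fun i : Fin n => ((i : ℤ) + 1)) M = necklaceOf n (fX X) ((a : ℤ) + 1)) := by
  refine ⟨GNaux.isGN_necklace X hX,
    fun a => ⟨GNaux.Ma X a, GNaux.Ma_card X hX a, GNaux.plk_Ma_ne X hX a,
      fun J hJ hJp => GNaux.Ma_min X hX a J hJ hJp⟩, ?_⟩
  rintro a M ⟨hc, hp, hmin⟩
  have hM : M = GNaux.Ma X a :=
    GNaux.min_unique a M (GNaux.Ma X a)
      (hmin _ (GNaux.Ma_card X hX a) (GNaux.plk_Ma_ne X hX a))
      (GNaux.Ma_min X hX a M hc hp)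
  rw [hM]
  exact GNaux.Ma_image X hX a
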